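/- There exists a shoe economy with three agents and injective utilities in which the strong core is a proper nonempty subset of the weak core: the allocation X = ((ℓ_2,r_3),(ℓ_3,r_1),(ℓ_1,r_2)) is in the strong core, while Y = ((ℓ_3,r_1),(ℓ_2,r_3),(ℓ_1,r_2)) is in the weak core but weakly blocked (by the grand coalition using X), hence not in the strong core. -/

import Mathlib

/-- Objects of the shoe economy: `Sum.inl a` is the left shoe `ℓ_a`,
`Sum.inr b` the right shoe `r_b`. -/
abbrev Shoe := Fin 3 ⊕ Fin 3

def shoeEndow (i : Fin 3) : Finset Shoe := {Sum.inl i, Sum.inr i}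

def IsPairBundle (X : Finset Shoe) : Prop :=
  ∃ a b : Fin 3, X = {Sum.inl a, Sum.inr b}

def IsSAlloc (X : Fin 3 → Finset Shoe) (S : Finset (Fin 3)) : Prop :=
  (∀ i ∈ S, ∀ j ∈ S, i ≠ j → Disjoint (X i) (X j)) ∧
    S.biUnion X ⊆ S.biUnion shoeEndow

/-- `b1 ≻ b2 ≻ b3 ≻` all other pair bundles, for agent `i`. -/
def ShoeRanking3 (v : Fin 3 → Finset Shoe → EReal) (i : Fin 3)
    (b1 b2 b3 : Finset Shoe) : Prop :=
  v i b2 < v i b1 ∧ v i b3 < v i b2 ∧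
    ∀ X : Finset Shoe, IsPairBundle X → X ≠ b1 → X ≠ b2 → X ≠ b3 → v i X < v i b3

/-- `b1 ≻ b2 ≻` all other pair bundles, for agent `i`. -/
def ShoeRanking2 (v : Fin 3 → Finset Shoe → EReal) (i : Fin 3)
    (b1 b2 : Finset Shoe) : Prop :=
  v i b2 < v i b1 ∧
    ∀ X : Finset Shoe, IsPairBundle X → X ≠ b1 → X ≠ b2 → v i X < v i b2

/-- The allocation `X = ((ℓ2,r3), (ℓ3,r1), (ℓ1,r2))`. -/
def allocX : Fin 3 → Finset Shoe :=
  ![{Sum.inl 1, Sum.inr 2}, {Sum.inl 2, Sum.inr 0}, {Sum.inl 0, Sum.inr 1}]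

/-- The allocation `Y = ((ℓ3,r1), (ℓ2,r3), (ℓ1,r2))`. -/
def allocY : Fin 3 → Finset Shoe :=
  ![{Sum.inl 2, Sum.inr 0}, {Sum.inl 1, Sum.inr 2}, {Sum.inl 0, Sum.inr 1}]

/-! Under `X` every agent holds its favourite bundle, so no coalition can make anyone strictly
better off. Under `Y` agent 3 holds its favourite bundle, so it stays out of any strongly blocking
coalition; but agents 1 and 2 improve on `Y` only with their favourite bundles, `(ℓ_2, r_3)` and
`(ℓ_3, r_1)`, each of which contains a shoe of agent 3. -/

lemma Finset.pair_inl_inr_eq_iff {α β : Type*} [DecidableEq α] [DecidableEq β] {a c : α} {b d : β} :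
    ({Sum.inl a, Sum.inr b} : Finset (α ⊕ β)) = {Sum.inl c, Sum.inr d} ↔ a = c ∧ b = d := by
  constructor
  · intro h
    have ha : (Sum.inl a : α ⊕ β) ∈ ({Sum.inl c, Sum.inr d} : Finset (α ⊕ β)) := h ▸ by simp
    have hb : (Sum.inr b : α ⊕ β) ∈ ({Sum.inl c, Sum.inr d} : Finset (α ⊕ β)) := h ▸ by simp
    simp_all
  · rintro ⟨rfl, rfl⟩
    rfl

lemma IsSAlloc.mem_of_mem_shoeEndow {X : Fin 3 → Finset Shoe} {S : Finset (Fin 3)}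
    (hX : IsSAlloc X S) {i j : Fin 3} {s : Shoe} (hi : i ∈ S) (hs : s ∈ X i)
    (hsj : s ∈ shoeEndow j) : j ∈ S := by
  obtain ⟨k, hk, hsk⟩ := Finset.mem_biUnion.mp (hX.2 (Finset.mem_biUnion.mpr ⟨i, hi, hs⟩))
  have hkj : k = j := by
    rcases s with a | a <;> simp_all [shoeEndow]
  exact hkj ▸ hk

def IsWeaklyBlocked (v : Fin 3 → Finset Shoe → EReal) (A : Fin 3 → Finset Shoe) : Prop :=
  ∃ (S : Finset (Fin 3)) (X' : Fin 3 → Finset Shoe), S.Nonempty ∧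
    IsSAlloc X' S ∧ (∀ i ∈ S, v i (A i) ≤ v i (X' i)) ∧ (∃ i ∈ S, v i (A i) < v i (X' i))

def IsStronglyBlocked (v : Fin 3 → Finset Shoe → EReal) (A : Fin 3 → Finset Shoe) : Prop :=
  ∃ (S : Finset (Fin 3)) (X' : Fin 3 → Finset Shoe), S.Nonempty ∧
    IsSAlloc X' S ∧ ∀ i ∈ S, v i (A i) < v i (X' i)

lemma not_isWeaklyBlocked_of_forall_le {v : Fin 3 → Finset Shoe → EReal}
    {A : Fin 3 → Finset Shoe} (h : ∀ i X, v i X ≤ v i (A i)) : ¬ IsWeaklyBlocked v A := by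
  rintro ⟨S, X', -, -, -, i, -, hlt⟩
  exact (h i (X' i)).not_gt hlt

section Ranking

variable {v : Fin 3 → Finset Shoe → EReal} {i : Fin 3} {b₁ b₂ b₃ : Finset Shoe}

lemma ShoeRanking3.le_first (h : ShoeRanking3 v i b₁ b₂ b₃)
    (hbot : ∀ X, ¬ IsPairBundle X → v i X = ⊥) (X : Finset Shoe) : v i X ≤ v i b₁ := by
  by_cases hX : IsPairBundle X
  · by_cases h₁ : X = b₁
    · exact h₁ ▸ le_rfl
    by_cases h₂ : X = b₂
    · exact h₂ ▸ h.1.le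
    by_cases h₃ : X = b₃
    · exact h₃ ▸ (h.2.1.trans h.1).le
    exact ((h.2.2 X hX h₁ h₂ h₃).trans (h.2.1.trans h.1)).le
  · exact hbot X hX ▸ bot_le

lemma ShoeRanking3.eq_first_of_second_lt (h : ShoeRanking3 v i b₁ b₂ b₃)
    (hbot : ∀ X, ¬ IsPairBundle X → v i X = ⊥) {X : Finset Shoe} (hX : v i b₂ < v i X) :
    X = b₁ := by
  by_contra h₁
  have hpair : IsPairBundle X := by
    by_contra hnp
    exact not_lt_bot (hbot X hnp ▸ hX)
  by_cases h₂ : X = b₂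
  · exact (h₂ ▸ hX).false
  by_cases h₃ : X = b₃
  · exact (h₃ ▸ hX).not_gt h.2.1
  exact ((h.2.2 X hpair h₁ h₂ h₃).trans h.2.1).not_gt hX

lemma ShoeRanking2.le_first (h : ShoeRanking2 v i b₁ b₂)
    (hbot : ∀ X, ¬ IsPairBundle X → v i X = ⊥) (X : Finset Shoe) : v i X ≤ v i b₁ := by
  by_cases hX : IsPairBundle X
  · by_cases h₁ : X = b₁
    · exact h₁ ▸ le_rfl
    by_cases h₂ : X = b₂
    · exact h₂ ▸ h.1.le
    exact ((h.2 X hX h₁ h₂).trans h.1).le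
  · exact hbot X hX ▸ bot_le

end Ranking

section Preferences

variable {v : Fin 3 → Finset Shoe → EReal} (hbot : ∀ i X, ¬ IsPairBundle X → v i X = ⊥)
  (h₀ : ShoeRanking3 v 0 {Sum.inl 1, Sum.inr 2} {Sum.inl 2, Sum.inr 0} {Sum.inl 0, Sum.inr 0})
  (h₁ : ShoeRanking3 v 1 {Sum.inl 2, Sum.inr 0} {Sum.inl 1, Sum.inr 2} {Sum.inl 1, Sum.inr 1})
  (h₂ : ShoeRanking2 v 2 {Sum.inl 0, Sum.inr 1} {Sum.inl 2, Sum.inr 2})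
include hbot h₀ h₁ h₂

lemma le_allocX (i : Fin 3) (X : Finset Shoe) : v i X ≤ v i (allocX i) := by
  fin_cases i
  · exact h₀.le_first (hbot 0) X
  · exact h₁.le_first (hbot 1) X
  · exact h₂.le_first (hbot 2) X

lemma not_isWeaklyBlocked_allocX : ¬ IsWeaklyBlocked v allocX :=
  not_isWeaklyBlocked_of_forall_le (le_allocX hbot h₀ h₁ h₂)

lemma allocY_le_allocX (i : Fin 3) : v i (allocY i) ≤ v i (allocX i) :=
  le_allocX hbot h₀ h₁ h₂ i _

lemma not_isStronglyBlocked_allocY : ¬ IsStronglyBlocked v allocY := by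
  rintro ⟨S, X', ⟨i, hi⟩, hX', hlt⟩
  have h2S : (2 : Fin 3) ∉ S := fun h2 =>
    (h₂.le_first (hbot 2) (X' 2)).not_gt (hlt 2 h2)
  fin_cases i
  · have hX0 : X' 0 = {Sum.inl 1, Sum.inr 2} := h₀.eq_first_of_second_lt (hbot 0) (hlt 0 hi)
    exact h2S (hX'.mem_of_mem_shoeEndow hi (s := Sum.inr 2) (by simp [hX0]) (by simp [shoeEndow]))
  · have hX1 : X' 1 = {Sum.inl 2, Sum.inr 0} := h₁.eq_first_of_second_lt (hbot 1) (hlt 1 hi)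
    exact h2S (hX'.mem_of_mem_shoeEndow hi (s := Sum.inl 2) (by simp [hX1]) (by simp [shoeEndow]))
  · exact h2S hi

end Preferences

open Classical in
noncomputable def pairUtility (u : Fin 3 → Fin 3 → Fin 3 → ℤ) (i : Fin 3) (X : Finset Shoe) :
    EReal :=
  if h : IsPairBundle X then ((u i h.choose h.choose_spec.choose : ℝ) : EReal) else ⊥

section PairUtility

variable (u : Fin 3 → Fin 3 → Fin 3 → ℤ) (i : Fin 3)

lemma pairUtility_pair (a b : Fin 3) :
    pairUtility u i {Sum.inl a, Sum.inr b} = ((u i a b : ℝ) : EReal) := by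
  have h : IsPairBundle {Sum.inl a, Sum.inr b} := ⟨a, b, rfl⟩
  obtain ⟨ha, hb⟩ := Finset.pair_inl_inr_eq_iff.mp h.choose_spec.choose_spec
  rw [pairUtility, dif_pos h, ← hb, ← ha]

lemma pairUtility_of_not_isPairBundle {X : Finset Shoe} (hX : ¬ IsPairBundle X) :
    pairUtility u i X = ⊥ := by
  rw [pairUtility, dif_neg hX]

lemma pairUtility_ne_bot {X : Finset Shoe} (hX : IsPairBundle X) : pairUtility u i X ≠ ⊥ := by
  obtain ⟨a, b, rfl⟩ := hX
  rw [pairUtility_pair]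
  exact EReal.coe_ne_bot _

variable {u i}

lemma pairUtility_lt_pairUtility {a b c d : Fin 3} (h : u i a b < u i c d) :
    pairUtility u i {Sum.inl a, Sum.inr b} < pairUtility u i {Sum.inl c, Sum.inr d} := by
  rw [pairUtility_pair, pairUtility_pair]
  exact_mod_cast h

lemma pairUtility_injective (hu : ∀ a b c d, u i a b = u i c d → a = c ∧ b = d)
    {X Y : Finset Shoe} (hX : IsPairBundle X) (hY : IsPairBundle Y) (hXY : X ≠ Y) :
    pairUtility u i X ≠ pairUtility u i Y := by
  obtain ⟨a, b, rfl⟩ := hX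
  obtain ⟨c, d, rfl⟩ := hY
  rw [pairUtility_pair, pairUtility_pair]
  intro h
  exact hXY (Finset.pair_inl_inr_eq_iff.mpr (hu a b c d (by exact_mod_cast h)))

lemma shoeRanking3_pairUtility {a₁ b₁ a₂ b₂ a₃ b₃ : Fin 3} (h₁₂ : u i a₂ b₂ < u i a₁ b₁)
    (h₂₃ : u i a₃ b₃ < u i a₂ b₂)
    (hrest : ∀ a b, ¬ (a = a₁ ∧ b = b₁) → ¬ (a = a₂ ∧ b = b₂) → ¬ (a = a₃ ∧ b = b₃) →
      u i a b < u i a₃ b₃) :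
    ShoeRanking3 (pairUtility u) i {Sum.inl a₁, Sum.inr b₁} {Sum.inl a₂, Sum.inr b₂}
      {Sum.inl a₃, Sum.inr b₃} := by
  refine ⟨pairUtility_lt_pairUtility h₁₂, pairUtility_lt_pairUtility h₂₃, ?_⟩
  rintro X ⟨a, b, rfl⟩ hne₁ hne₂ hne₃
  simp only [ne_eq, Finset.pair_inl_inr_eq_iff] at hne₁ hne₂ hne₃
  exact pairUtility_lt_pairUtility (hrest a b hne₁ hne₂ hne₃)

lemma shoeRanking2_pairUtility {a₁ b₁ a₂ b₂ : Fin 3} (h₁₂ : u i a₂ b₂ < u i a₁ b₁)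
    (hrest : ∀ a b, ¬ (a = a₁ ∧ b = b₁) → ¬ (a = a₂ ∧ b = b₂) → u i a b < u i a₂ b₂) :
    ShoeRanking2 (pairUtility u) i {Sum.inl a₁, Sum.inr b₁} {Sum.inl a₂, Sum.inr b₂} := by
  refine ⟨pairUtility_lt_pairUtility h₁₂, ?_⟩
  rintro X ⟨a, b, rfl⟩ hne₁ hne₂
  simp only [ne_eq, Finset.pair_inl_inr_eq_iff] at hne₁ hne₂
  exact pairUtility_lt_pairUtility (hrest a b hne₁ hne₂)

end PairUtility

/-- Unranked bundles `(ℓ_{a+1}, r_{b+1})` get the distinct values `3a + b - 10 < 0`, below every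
ranked one. -/
def shoeScore : Fin 3 → Fin 3 → Fin 3 → ℤ
  | 0, 1, 2 => 9 | 0, 2, 0 => 8 | 0, 0, 0 => 7
  | 1, 2, 0 => 9 | 1, 1, 2 => 8 | 1, 1, 1 => 7
  | 2, 0, 1 => 9 | 2, 2, 2 => 8
  | _, a, b => 3 * a + b - 10

lemma shoeScore_injective : ∀ i a b c d, shoeScore i a b = shoeScore i c d → a = c ∧ b = d := by
  decide

/-- a shoe economy with injective utilities in which the strong
core is a proper nonempty subset of the weak core: `X` is in the strong core,
`Y` is in the weak core but is weakly blocked (by the grand coalition via `X`),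
hence not in the strong core. -/
theorem shoe_economy_strong_core_proper_subset :
    ∃ v : Fin 3 → Finset Shoe → EReal,
      (∀ i X, ¬ IsPairBundle X → v i X = ⊥) ∧
      (∀ i X, IsPairBundle X → v i X ≠ ⊥) ∧
      -- injective utilities (no indifferences among pair bundles)
      (∀ i, ∀ X Y : Finset Shoe, IsPairBundle X → IsPairBundle Y → X ≠ Y →
        v i X ≠ v i Y) ∧
      -- agent 1: (ℓ2,r3) ≻ (ℓ3,r1) ≻ (ℓ1,r1) ≻ rest
      ShoeRanking3 v 0 {Sum.inl 1, Sum.inr 2} {Sum.inl 2, Sum.inr 0} {Sum.inl 0, Sum.inr 0} ∧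
      -- agent 2: (ℓ3,r1) ≻ (ℓ2,r3) ≻ (ℓ2,r2) ≻ rest
      ShoeRanking3 v 1 {Sum.inl 2, Sum.inr 0} {Sum.inl 1, Sum.inr 2} {Sum.inl 1, Sum.inr 1} ∧
      -- agent 3: (ℓ1,r2) ≻ (ℓ3,r3) ≻ rest
      ShoeRanking2 v 2 {Sum.inl 0, Sum.inr 1} {Sum.inl 2, Sum.inr 2} ∧
      -- X is an allocation in the strong core: not weakly blocked
      IsSAlloc allocX Finset.univ ∧
      (¬ ∃ (S : Finset (Fin 3)) (X' : Fin 3 → Finset Shoe), S.Nonempty ∧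
          IsSAlloc X' S ∧ (∀ i ∈ S, v i (allocX i) ≤ v i (X' i)) ∧
          (∃ i ∈ S, v i (allocX i) < v i (X' i))) ∧
      -- Y is an allocation in the weak core: not strongly blocked
      IsSAlloc allocY Finset.univ ∧
      (¬ ∃ (S : Finset (Fin 3)) (X' : Fin 3 → Finset Shoe), S.Nonempty ∧
          IsSAlloc X' S ∧ ∀ i ∈ S, v i (allocY i) < v i (X' i)) ∧
      -- but Y is weakly blocked by the grand coalition via X
      ((∀ i, v i (allocY i) ≤ v i (allocX i)) ∧
        (∃ i, v i (allocY i) < v i (allocX i))) := by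
  have hbot : ∀ i X, ¬ IsPairBundle X → pairUtility shoeScore i X = ⊥ := fun i _ hX =>
    pairUtility_of_not_isPairBundle shoeScore i hX
  have h₀ : ShoeRanking3 (pairUtility shoeScore) 0 {Sum.inl 1, Sum.inr 2}
      {Sum.inl 2, Sum.inr 0} {Sum.inl 0, Sum.inr 0} :=
    shoeRanking3_pairUtility (by decide) (by decide) (by decide)
  have h₁ : ShoeRanking3 (pairUtility shoeScore) 1 {Sum.inl 2, Sum.inr 0}
      {Sum.inl 1, Sum.inr 2} {Sum.inl 1, Sum.inr 1} :=
    shoeRanking3_pairUtility (by decide) (by decide) (by decide)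
  have h₂ : ShoeRanking2 (pairUtility shoeScore) 2 {Sum.inl 0, Sum.inr 1}
      {Sum.inl 2, Sum.inr 2} :=
    shoeRanking2_pairUtility (by decide) (by decide)
  exact ⟨pairUtility shoeScore, hbot, fun i _ => pairUtility_ne_bot shoeScore i,
    fun i _ _ => pairUtility_injective (shoeScore_injective i), h₀, h₁, h₂,
    ⟨by decide, by decide⟩, not_isWeaklyBlocked_allocX hbot h₀ h₁ h₂,
    ⟨by decide, by decide⟩, not_isStronglyBlocked_allocY hbot h₀ h₁ h₂,
    allocY_le_allocX hbot h₀ h₁ h₂, 0, h₀.1⟩
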